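/- arXiv:1903.04996 — 8 statements merged into one kernel-verified Lean document; each statement's English description precedes it below -/
import Mathlib

section
/- For every n ≥ 2, the generalized Motzkin polynomial M_n is nonnegative on all of ℝⁿ, i.e., M_n(x) ≥ 0 for every x ∈ ℝⁿ. -/
open MvPolynomial Finset

noncomputable section

/-- The all-ones exponent vector `e = (1,…,1)`. -/
def eAll (n : ℕ) : Fin n →₀ ℕ := Finsupp.equivFunOnFinite.symm (fun _ => 1)

/-- The exponent vector `2(e + e_j)`. -/
def expMotz (n : ℕ) (j : Fin n) : Fin n →₀ ℕ :=
  Finsupp.equivFunOnFinite.symm (fun i => if i = j then 4 else 2)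

/-- The exponent vector `2e = (2,…,2)`. -/
def twoE (n : ℕ) : Fin n →₀ ℕ := Finsupp.equivFunOnFinite.symm (fun _ => 2)

/-- The generalized Motzkin polynomial
`M_n = 1 + Σ_{j=1}^n x^{2(e+e_j)} − (n+1)·x^{2e}`. -/
def Motzkin (n : ℕ) : MvPolynomial (Fin n) ℝ :=
  1 + (∑ j : Fin n, monomial (expMotz n j) (1 : ℝ)) - monomial (twoE n) ((n : ℝ) + 1)

/-- The signed quadric `N_n = (1 − Σ_{j=1}^n x_j)²`. -/
def SignedQuadric (n : ℕ) : MvPolynomial (Fin n) ℝ :=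
  (1 - ∑ j : Fin n, X j) ^ 2

/-- `f` is a circuit polynomial. -/
def IsCircuit {n : ℕ} (f : MvPolynomial (Fin n) ℝ) : Prop :=
  (∃ (w : Fin n →₀ ℕ) (c : ℝ), 0 ≤ c ∧ f = monomial (2 • w) c) ∨
  (∃ r : ℕ, r ≤ n ∧ ∃ (α : Fin (r + 1) → (Fin n →₀ ℕ)) (c : Fin (r + 1) → ℝ)
      (β : Fin n →₀ ℕ) (fβ : ℝ) (lam : Fin (r + 1) → ℝ),
    (∀ j, 0 < c j) ∧
    (∀ j i, Even (α j i)) ∧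
    AffineIndependent ℝ (fun j => (fun i => (α j i : ℝ))) ∧
    (∀ j, 0 < lam j) ∧ (∑ j, lam j) = 1 ∧
    (∀ i, (β i : ℝ) = ∑ j, lam j * (α j i : ℝ)) ∧
    f = monomial β fβ + ∑ j, monomial (α j) (c j))

/-- `f` is a nonnegative circuit polynomial. -/
def IsNonnegCircuit {n : ℕ} (f : MvPolynomial (Fin n) ℝ) : Prop :=
  IsCircuit f ∧ ∀ x : Fin n → ℝ, 0 ≤ eval x f

/-- The set of sums of nonnegative circuit polynomials. -/
def SONCset (n : ℕ) : Set (MvPolynomial (Fin n) ℝ) :=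
  {f | ∃ (k : ℕ) (μ : Fin k → ℝ) (p : Fin k → MvPolynomial (Fin n) ℝ),
    (∀ i, 0 ≤ μ i) ∧ (∀ i, IsNonnegCircuit (p i)) ∧ f = ∑ i, μ i • p i}

/-- The set of sums of squares. -/
def SOSset (n : ℕ) : Set (MvPolynomial (Fin n) ℝ) :=
  {f | ∃ (k : ℕ) (p : Fin k → MvPolynomial (Fin n) ℝ), f = ∑ i, (p i) ^ 2}

/-- The set of sums of squares of binomials (SDSOS). -/
def SDSOSset (n : ℕ) : Set (MvPolynomial (Fin n) ℝ) :=
  {f | ∃ (k : ℕ) (a b : Fin k → ℝ) (u v : Fin k → (Fin n →₀ ℕ)),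
    f = ∑ i, (monomial (u i) (a i) + monomial (v i) (b i)) ^ 2}

/-- The Sherali-Adams set: nonnegative combinations of `x_I · x̄_J`. -/
def SAset (n : ℕ) : Set (MvPolynomial (Fin n) ℝ) :=
  {f | ∃ α : Finset (Fin n) × Finset (Fin n) → ℝ, (∀ p, 0 ≤ α p) ∧
    f = ∑ p : Finset (Fin n) × Finset (Fin n),
      α p • ((∏ i ∈ p.1, X i) * ∏ j ∈ p.2, (1 - X j))}

/-- The preprime generated by a finite constraint set. -/
def preprime {n : ℕ} (G : Finset (MvPolynomial (Fin n) ℝ)) :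
    Set (MvPolynomial (Fin n) ℝ) :=
  {p | ∃ (k : ℕ) (cc : Fin k → ℝ) (e : Fin k → MvPolynomial (Fin n) ℝ → ℕ),
    (∀ i, 0 ≤ cc i) ∧ p = ∑ i, cc i • ∏ g ∈ G, g ^ (e i g)}

/-- The feasibility set `𝒢₊` of a constraint set. -/
def feasSet {n : ℕ} (G : Finset (MvPolynomial (Fin n) ℝ)) : Set (Fin n → ℝ) :=
  {x | ∀ g ∈ G, 0 ≤ eval x g}

/-- The Boolean hypercube `{0,1}ⁿ ⊆ ℝⁿ`. -/
def Hypercube (n : ℕ) : Set (Fin n → ℝ) := {x | ∀ i, x i = 0 ∨ x i = 1}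

/-- The degree-`D` Putinar-type hierarchy `H(GEN, 𝒢, D)`. -/
def HPut {n : ℕ} (GEN : Set (MvPolynomial (Fin n) ℝ))
    (G : Finset (MvPolynomial (Fin n) ℝ)) (D : ℕ) : Set (MvPolynomial (Fin n) ℝ) :=
  {f | ∃ (k : ℕ) (s g : Fin k → MvPolynomial (Fin n) ℝ),
    (∀ i, s i ∈ GEN) ∧ (∀ i, g i ∈ G) ∧
    (∀ i, (s i * g i).totalDegree ≤ D) ∧ f = ∑ i, s i * g i}

/-- The degree-`D` Schmüdgen-type hierarchy `H*(GEN, 𝒢, D)`. -/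
def HSch {n : ℕ} (GEN : Set (MvPolynomial (Fin n) ℝ))
    (G : Finset (MvPolynomial (Fin n) ℝ)) (D : ℕ) : Set (MvPolynomial (Fin n) ℝ) :=
  {f | ∃ (k : ℕ) (s g : Fin k → MvPolynomial (Fin n) ℝ),
    (∀ i, s i ∈ GEN) ∧ (∀ i, g i ∈ preprime G) ∧
    (∀ i, (s i * g i).totalDegree ≤ D) ∧ f = ∑ i, s i * g i}

/-- `bound(f, GEN, 𝒢, D)` for the Putinar-type hierarchy, valued in `EReal`. -/
def boundPut {n : ℕ} (f : MvPolynomial (Fin n) ℝ) (GEN : Set (MvPolynomial (Fin n) ℝ))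
    (G : Finset (MvPolynomial (Fin n) ℝ)) (D : ℕ) : EReal :=
  sSup {x : EReal | ∃ lam : ℝ, x = (lam : EReal) ∧ f - C lam ∈ HPut GEN G D}

/-- `boundSch(f, GEN, 𝒢, D)` for the Schmüdgen-type hierarchy, valued in `EReal`. -/
def boundSch {n : ℕ} (f : MvPolynomial (Fin n) ℝ) (GEN : Set (MvPolynomial (Fin n) ℝ))
    (G : Finset (MvPolynomial (Fin n) ℝ)) (D : ℕ) : EReal :=
  sSup {x : EReal | ∃ lam : ℝ, x = (lam : EReal) ∧ f - C lam ∈ HSch GEN G D}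

/-- Putinar-type Sherali-Adams hierarchy with the SA degree convention
`deg p_i ≤ ⌊(D − deg g_i)/2⌋`, encoded as `2·deg p_i + deg g_i ≤ D`. -/
def HPutSA {n : ℕ} (G : Finset (MvPolynomial (Fin n) ℝ)) (D : ℕ) :
    Set (MvPolynomial (Fin n) ℝ) :=
  {f | ∃ (k : ℕ) (p g : Fin k → MvPolynomial (Fin n) ℝ),
    (∀ i, p i ∈ SAset n) ∧ (∀ i, g i ∈ G) ∧
    (∀ i, 2 * (p i).totalDegree + (g i).totalDegree ≤ D) ∧ f = ∑ i, p i * g i}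

/-- Schmüdgen-type Sherali-Adams hierarchy with the SA degree convention. -/
def HSchSA {n : ℕ} (G : Finset (MvPolynomial (Fin n) ℝ)) (D : ℕ) :
    Set (MvPolynomial (Fin n) ℝ) :=
  {f | ∃ (k : ℕ) (p g : Fin k → MvPolynomial (Fin n) ℝ),
    (∀ i, p i ∈ SAset n) ∧ (∀ i, g i ∈ preprime G) ∧
    (∀ i, 2 * (p i).totalDegree + (g i).totalDegree ≤ D) ∧ f = ∑ i, p i * g i}

/-- `bound(f, 𝕊𝔸, 𝒢, D)`. -/
def boundPutSA {n : ℕ} (f : MvPolynomial (Fin n) ℝ)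
    (G : Finset (MvPolynomial (Fin n) ℝ)) (D : ℕ) : EReal :=
  sSup {x : EReal | ∃ lam : ℝ, x = (lam : EReal) ∧ f - C lam ∈ HPutSA G D}

/-- `boundSch(f, 𝕊𝔸, 𝒢, D)`. -/
def boundSchSA {n : ℕ} (f : MvPolynomial (Fin n) ℝ)
    (G : Finset (MvPolynomial (Fin n) ℝ)) (D : ℕ) : EReal :=
  sSup {x : EReal | ∃ lam : ℝ, x = (lam : EReal) ∧ f - C lam ∈ HSchSA G D}

end

/-!
At a point `x` put `yᵢ = xᵢ²` and `P = ∏ yᵢ`. The `n + 1` numbers `1, y₁ P, …, yₙ P` have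
product `P ^ (n + 1)`, so AM-GM gives `(n + 1) P ≤ 1 + ∑ yⱼ P`, which is `M_n(x) ≥ 0`.
-/

theorem Real.card_mul_le_sum_of_prod_eq_pow {ι : Type*} (s : Finset ι) {z : ι → ℝ} {P : ℝ}
    (hz : ∀ i ∈ s, 0 ≤ z i) (hP : 0 ≤ P) (hprod : ∏ i ∈ s, z i = P ^ #s) :
    #s * P ≤ ∑ i ∈ s, z i := by
  rcases s.eq_empty_or_nonempty with rfl | hs
  · simp
  have hcard : (0 : ℝ) < #s := by exact_mod_cast hs.card_pos
  have amgm := Real.geom_mean_le_arith_mean s (fun _ => 1) z (fun _ _ => zero_le_one)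
    (by simpa using hcard) hz
  simp only [Real.rpow_one, one_mul, sum_const, nsmul_eq_mul, mul_one, hprod] at amgm
  rw [Real.pow_rpow_inv_natCast hP hs.card_pos.ne', le_div_iff₀ hcard] at amgm
  linarith

theorem succ_mul_prod_le_one_add_sum_mul_prod {n : ℕ} {y : Fin n → ℝ} (hy : ∀ i, 0 ≤ y i) :
    (n + 1) * ∏ i, y i ≤ 1 + ∑ j, y j * ∏ i, y i := by
  set P := ∏ i, y i
  have hP : 0 ≤ P := prod_nonneg fun i _ => hy i
  have := Real.card_mul_le_sum_of_prod_eq_pow (univ : Finset (Fin (n + 1)))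
    (z := Fin.cons 1 fun j => y j * P) (P := P) ?_ hP ?_
  · simpa [Fin.sum_univ_succ] using this
  · intro i _
    cases i using Fin.cases with
    | zero => exact zero_le_one
    | succ j => exact mul_nonneg (hy j) hP
  · simp [Fin.prod_univ_succ, prod_mul_distrib, pow_succ', P]

theorem eval_monomial_expMotz {n : ℕ} (x : Fin n → ℝ) (j : Fin n) :
    eval x (monomial (expMotz n j) 1) = x j ^ 2 * ∏ i, x i ^ 2 := by
  simp only [eval_monomial, expMotz, Finsupp.prod_fintype _ _ (fun i => pow_zero (x i)),
    Finsupp.coe_equivFunOnFinite_symm, one_mul]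
  rw [Fintype.prod_eq_mul_prod_compl j, Fintype.prod_eq_mul_prod_compl j (fun i => x i ^ 2),
    if_pos rfl, prod_congr rfl (g := fun i => x i ^ 2) fun i hi => by
      rw [if_neg (by simpa using hi)]]
  ring

theorem eval_monomial_twoE {n : ℕ} (x : Fin n → ℝ) (c : ℝ) :
    eval x (monomial (twoE n) c) = c * ∏ i, x i ^ 2 := by
  simp [eval_monomial, twoE, Finsupp.prod_fintype]

theorem eval_Motzkin (n : ℕ) (x : Fin n → ℝ) :
    eval x (Motzkin n) = 1 + ∑ j, x j ^ 2 * ∏ i, x i ^ 2 - (n + 1) * ∏ i, x i ^ 2 := by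
  simp only [Motzkin, map_sub, map_add, map_sum, map_one, eval_monomial_expMotz,
    eval_monomial_twoE]
  ring

theorem motzkin_nonneg_general (n : ℕ) (x : Fin n → ℝ) :
    0 ≤ MvPolynomial.eval x (Motzkin n) := by
  rw [eval_Motzkin, sub_nonneg]
  exact succ_mul_prod_le_one_add_sum_mul_prod fun i => sq_nonneg (x i)

/-- For every `n ≥ 2`, the generalized Motzkin polynomial `M_n`
is nonnegative on all of `ℝⁿ`. -/
theorem motzkin_nonneg (n : ℕ) (hn : 2 ≤ n) (x : Fin n → ℝ) :
    0 ≤ MvPolynomial.eval x (Motzkin n) :=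
  motzkin_nonneg_general n x
end

section
/- For every n ≥ 2, the generalized Motzkin polynomial M_n is not a sum of squares of polynomials: there is no finite family f₁,…,f_k ∈ ℝ[x₁,…,xₙ] with M_n = Σ_{i=1}^k f_i². -/
open MvPolynomial Finset

/-!
Specialising `x₂ = ⋯ = x_{n-1} = 1` turns `M_n` into the classical Motzkin polynomial
`M(x, y) = 1 + x²y²(x² + y² − 3)`, so it suffices to show that `M` is not a sum of squares in
`ℝ[x][y]`. If `M = ∑ Gᵢ²`, the top coefficients in `y` of the squares cannot cancel, so
`Gᵢ = aᵢy² + bᵢy + cᵢ`, and the coefficients of `y⁴, y⁰, y²` give `∑ aᵢ² = x²`, `∑ cᵢ² = 1` and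
`∑ (2aᵢcᵢ + bᵢ²) = x⁴ − 3x²`. The first two force `aᵢ ∈ ℝx` and `cᵢ ∈ ℝ`, so the functional
`p ↦ p(1) + p(−1)` kills every `2aᵢcᵢ` and is nonnegative on every `bᵢ²`, but equals `−4` on
`x⁴ − 3x²`.
-/

theorem IsFormallyReal.eq_zero_of_sum_sq_eq_zero {R ι : Type*} [CommRing R] [IsFormallyReal R]
    {s : Finset ι} {x : ι → R} (h : ∑ i ∈ s, x i ^ 2 = 0) : ∀ i ∈ s, x i = 0 := by
  classical
  induction s using Finset.induction_on with
  | empty => simp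
  | insert a s ha ih =>
    rw [Finset.sum_insert ha] at h
    have hsq : IsSumSq (x a ^ 2) := (IsSquare.sq (x a)).isSumSq
    have hrest : IsSumSq (∑ i ∈ s, x i ^ 2) := IsSumSq.sum_sq s x
    intro i hi
    rcases Finset.mem_insert.mp hi with rfl | hi
    · exact IsNilpotent.eq_zero ⟨2, eq_zero_of_add_right hsq hrest h⟩
    · exact ih (eq_zero_of_add_left hsq hrest h) i hi

namespace Polynomial

instance isFormallyReal {R : Type*} [CommRing R] [LinearOrder R] [IsStrictOrderedRing R] :
    IsFormallyReal R[X] := by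
  refine .of_eq_zero_of_eq_zero_of_mul_self_add fun {s a} hs h => Polynomial.funext fun x => ?_
  have eval_nonneg : ∀ {t : R[X]}, IsSumSq t → 0 ≤ t.eval x := fun ht => by
    induction ht with
    | zero => simp
    | sq_add b _ ih => simpa using add_nonneg (mul_self_nonneg (b.eval x)) ih
  have := congrArg (eval x) h
  simp only [eval_add, eval_mul, eval_zero] at this ⊢
  nlinarith [mul_self_nonneg (a.eval x), eval_nonneg hs]

theorem natDegree_le_of_natDegree_sum_sq_le {R ι : Type*} [CommRing R]
    [IsFormallyReal R] {s : Finset ι} {g : ι → R[X]} {d : ℕ}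
    (h : (∑ i ∈ s, g i ^ 2).natDegree ≤ 2 * d) : ∀ i ∈ s, (g i).natDegree ≤ d := by
  by_contra! ⟨i, hi, hid⟩
  set m := s.sup fun j => (g j).natDegree
  have hle : ∀ j ∈ s, (g j).natDegree ≤ m := fun j hj =>
    Finset.le_sup (f := fun j => (g j).natDegree) hj
  have hdm : d < m := hid.trans_le (hle i hi)
  -- the top coefficients of the squares cannot cancel
  have htop : ∑ j ∈ s, (g j).coeff m ^ 2 = 0 := calc
    ∑ j ∈ s, (g j).coeff m ^ 2 = (∑ j ∈ s, g j ^ 2).coeff (2 * m) := by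
      rw [finsetSum_coeff]
      exact Finset.sum_congr rfl fun j hj => (coeff_pow_of_natDegree_le (hle j hj)).symm
    _ = 0 := coeff_eq_zero_of_natDegree_lt (by omega)
  obtain ⟨j, hj, hjm⟩ := Finset.exists_mem_eq_sup s ⟨i, hi⟩ fun j => (g j).natDegree
  have hgj : g j = 0 := by
    rw [← leadingCoeff_eq_zero, leadingCoeff, ← hjm]
    exact IsFormallyReal.eq_zero_of_sum_sq_eq_zero htop j hj
  rw [hgj, natDegree_zero] at hjm
  omega

theorem coeff_sq_two {R : Type*} [CommRing R] (p : R[X]) :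
    (p ^ 2).coeff 2 = 2 * (p.coeff 0 * p.coeff 2) + p.coeff 1 ^ 2 := by
  rw [sq, coeff_mul, Finset.Nat.sum_antidiagonal_eq_sum_range_succ_mk]
  simp only [Finset.sum_range_succ, Finset.sum_range_zero]
  ring

theorem eq_C_mul_X_of_sum_sq_eq_X_sq {R ι : Type*} [CommRing R] [IsFormallyReal R]
    {s : Finset ι} {a : ι → R[X]} (h : ∑ i ∈ s, a i ^ 2 = X ^ 2) :
    ∀ i ∈ s, a i = C ((a i).coeff 1) * X := by
  have hdeg := natDegree_le_of_natDegree_sum_sq_le (d := 1) (h ▸ natDegree_X_pow_le 2)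
  have hcoeff0 : ∀ i ∈ s, (a i).coeff 0 = 0 := by
    refine IsFormallyReal.eq_zero_of_sum_sq_eq_zero ?_
    simpa [coeff_zero_eq_eval_zero, eval_finsetSum] using congrArg (eval 0) h
  intro i hi
  rw [eq_X_add_C_of_natDegree_le_one (hdeg i hi), hcoeff0 i hi]
  simp

theorem sum_two_mul_add_sq_ne {ι : Type*} {s : Finset ι} {a b c : ι → ℝ[X]}
    (ha : ∑ i ∈ s, a i ^ 2 = X ^ 2) (hc : ∑ i ∈ s, c i ^ 2 = 1) :
    ∑ i ∈ s, (2 * (c i * a i) + b i ^ 2) ≠ X ^ 4 - 3 * X ^ 2 := by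
  intro h
  have hlin := eq_C_mul_X_of_sum_sq_eq_X_sq ha
  have hconst : ∀ i ∈ s, c i = C ((c i).coeff 0) := fun i hi =>
    eq_C_of_natDegree_le_zero <|
      natDegree_le_of_natDegree_sum_sq_le (d := 0) (hc ▸ natDegree_one.le) i hi
  have hsym := congrArg (fun p => eval 1 p + eval (-1) p) h
  simp only [eval_finsetSum, ← Finset.sum_add_distrib] at hsym
  have hnonneg : 0 ≤ ∑ i ∈ s, (eval 1 (2 * (c i * a i) + b i ^ 2) +
      eval (-1) (2 * (c i * a i) + b i ^ 2)) := by
    refine Finset.sum_nonneg fun i hi => ?_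
    rw [hlin i hi, hconst i hi]
    simp only [eval_add, eval_mul, eval_pow, eval_C, eval_X, eval_ofNat]
    nlinarith [sq_nonneg (eval 1 (b i)), sq_nonneg (eval (-1) (b i))]
  rw [hsym] at hnonneg
  norm_num at hnonneg

theorem sum_sq_ne_motzkin {ι : Type*} (s : Finset ι) (G : ι → ℝ[X][X]) :
    ∑ i ∈ s, G i ^ 2 ≠ 1 + C (X ^ 2) * X ^ 2 * (C (X ^ 2) + X ^ 2 - 3) := by
  intro h
  replace h : ∑ i ∈ s, G i ^ 2 = C (X ^ 2) * X ^ 4 + C (X ^ 4 - 3 * X ^ 2) * X ^ 2 + 1 := by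
    rw [h]; simp only [map_sub, map_mul, map_pow, map_ofNat]; ring
  have hdeg : ∀ i ∈ s, (G i).natDegree ≤ 2 :=
    natDegree_le_of_natDegree_sum_sq_le (by rw [h]; compute_degree)
  have h4 : ∑ i ∈ s, (G i).coeff 2 ^ 2 = X ^ 2 := by
    have := congrArg (coeff · (2 * 2)) h
    simp only [finsetSum_coeff] at this
    rw [Finset.sum_congr rfl fun i hi => coeff_pow_of_natDegree_le (hdeg i hi)] at this
    simpa only [coeff_add, coeff_C_mul_X_pow, coeff_one, Nat.reduceMul, Nat.reduceEqDiff,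
      ↓reduceIte, add_zero] using this
  have h0 : ∑ i ∈ s, (G i).coeff 0 ^ 2 = 1 := by
    simpa [coeff_zero_eq_eval_zero, eval_finsetSum] using congrArg (eval 0) h
  refine sum_two_mul_add_sq_ne (b := fun i => (G i).coeff 1) h4 h0 ?_
  simpa only [finsetSum_coeff, coeff_sq_two, coeff_add, coeff_C_mul_X_pow, coeff_one,
    Nat.reduceEqDiff, ↓reduceIte, add_zero, zero_add] using congrArg (coeff · 2) h

end Polynomial

theorem aeval_motzkin {A : Type*} [CommRing A] [Algebra ℝ A] (n : ℕ) (g : Fin n → A) :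
    aeval g (Motzkin n) = 1 + (∏ j, g j ^ 2) * (∑ j, g j ^ 2 - (n + 1)) := by
  have hexp : ∀ j, aeval g (monomial (expMotz n j) (1 : ℝ)) = (∏ i, g i ^ 2) * g j ^ 2 := by
    intro j
    rw [aeval_monomial, Finsupp.prod_fintype _ _ fun _ => pow_zero _]
    simp only [expMotz, Finsupp.coe_equivFunOnFinite_symm, map_one, one_mul]
    calc ∏ i, g i ^ (if i = j then 4 else 2)
        = ∏ i, g i ^ 2 * (if i = j then g i ^ 2 else 1) :=
          Finset.prod_congr rfl fun i _ => by split_ifs <;> ring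
      _ = (∏ i, g i ^ 2) * g j ^ 2 := by rw [Finset.prod_mul_distrib, Finset.prod_ite_eq']; simp
  have htwo : aeval g (monomial (twoE n) ((n : ℝ) + 1)) = (n + 1) * ∏ i, g i ^ 2 := by
    rw [aeval_monomial, Finsupp.prod_fintype _ _ fun _ => pow_zero _]
    simp [twoE]
  rw [Motzkin, map_sub, map_add, map_one, map_sum, htwo, Finset.sum_congr rfl fun j _ => hexp j,
    ← Finset.mul_sum]
  ring

/-- For every `n ≥ 2`, the generalized Motzkin polynomial `M_n` is not
a sum of squares of polynomials. -/
theorem motzkin_not_sos (n : ℕ) (hn : 2 ≤ n) :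
    ¬ ∃ (k : ℕ) (f : Fin k → MvPolynomial (Fin n) ℝ),
      Motzkin n = ∑ i : Fin k, (f i) ^ 2 := by
  rintro ⟨k, f, hf⟩
  obtain ⟨m, rfl⟩ := Nat.exists_eq_add_of_le' hn
  -- `x₀ ↦ x` (the inner variable `C X`), `x₁ ↦ y`, all other `xⱼ ↦ 1`
  let g : Fin (m + 2) → Polynomial (Polynomial ℝ) :=
    Fin.cons (Polynomial.C Polynomial.X) (Fin.cons Polynomial.X 1)
  apply Polynomial.sum_sq_ne_motzkin Finset.univ (fun i => aeval g (f i))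
  have hsubst := congrArg (aeval g) hf
  simp only [aeval_motzkin, map_sum, map_pow, Fin.prod_univ_succ, Fin.sum_univ_succ] at hsubst
  rw [← hsubst]
  simp only [g, Fin.cons_zero, Fin.succ_zero_eq_one, Fin.cons_one, Fin.cons_succ, Pi.one_apply,
    one_pow, prod_const_one, mul_one, sum_const, card_univ, Fintype.card_fin, nsmul_eq_mul,
    Nat.cast_add, Nat.cast_ofNat, map_pow]
  ring
end

section
/- For every n ≥ 2, the even lattice points of the Newton polytope of the generalized Motzkin polynomial are exactly its vertices together with the inner exponent: conv({0} ∪ {2(e+e_j) : j ∈ [n]}) ∩ (2ℤ)ⁿ = {0} ∪ {2(e+e_j) : j ∈ [n]} ∪ {2e}. -/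
open MvPolynomial Finset

/-! On the vertices, hence on their hull, `x ≥ 0`, `∑ xᵢ ≤ 2(n+1)` and `∑ xᵢ ≤ (n+1) x_k`.
For an even point `x = 2m` this says `m ≥ 0`, `∑ mᵢ ≤ n+1` and `∑ mᵢ ≤ (n+1) m_k`. If some
`m_k = 0`, the last inequality forces `m = 0`. Otherwise `m ≥ 1` and `∑ (mᵢ - 1) ≤ 1`, so `m - 1`
is `0` or a unit vector, and `x` is `2e` or a vertex `2(e + e_j)`. Conversely, `2e` is the
barycentre of the `n + 1` vertices. -/

section ConvexHull

variable {E : Type*} [AddCommGroup E] [Module ℝ E]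

theorem IsLinearMap.le_of_mem_convexHull {f : E → ℝ} (hf : IsLinearMap ℝ f) {s : Set E} {c : ℝ}
    (hs : ∀ y ∈ s, f y ≤ c) {x : E} (hx : x ∈ convexHull ℝ s) : f x ≤ c :=
  convexHull_min hs (convex_halfSpace_le hf c) hx

end ConvexHull

section IntegerVectors

variable {ι : Type*} [Fintype ι] [DecidableEq ι]

theorem eq_zero_or_eq_single_of_sum_le_one {d : ι → ℤ} (h0 : ∀ i, 0 ≤ d i)
    (h1 : ∑ i, d i ≤ 1) : d = 0 ∨ ∃ j, d = Pi.single j 1 := by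
  by_cases hd : d = 0
  · exact Or.inl hd
  obtain ⟨j, hj⟩ : ∃ j, d j ≠ 0 := by
    by_contra! h
    exact hd (funext h)
  have hsplit := add_sum_erase univ d (mem_univ j)
  have hrest_nonneg : 0 ≤ ∑ i ∈ univ.erase j, d i := sum_nonneg fun i _ => h0 i
  have hdj : d j = 1 := by have := h0 j; omega
  have hrest : ∑ i ∈ univ.erase j, d i = 0 := by omega
  rw [sum_eq_zero_iff_of_nonneg fun i _ => h0 i] at hrest
  refine Or.inr ⟨j, funext fun i => ?_⟩
  by_cases hij : i = j
  · subst hij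
    simp [hdj]
  · simp [hij, hrest i (mem_erase.2 ⟨hij, mem_univ i⟩)]

theorem eq_zero_or_eq_one_or_eq_one_add_single {m : ι → ℤ} (h0 : ∀ i, 0 ≤ m i)
    (hsum : ∑ i, m i ≤ Fintype.card ι + 1)
    (hfacet : ∀ k, ∑ i, m i ≤ (Fintype.card ι + 1) * m k) :
    m = 0 ∨ m = 1 ∨ ∃ j, m = 1 + Pi.single j 1 := by
  by_cases hz : ∃ k, m k = 0
  · obtain ⟨k, hk⟩ := hz
    have hle : ∑ i, m i ≤ 0 := by simpa [hk] using hfacet k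
    have hzero := (sum_eq_zero_iff_of_nonneg fun i _ => h0 i).1
      (le_antisymm hle (sum_nonneg fun i _ => h0 i))
    exact Or.inl (funext fun i => hzero i (mem_univ i))
  push Not at hz
  have hd0 : ∀ i, 0 ≤ (m - 1) i := fun i => by
    have := h0 i
    have := hz i
    simp only [Pi.sub_apply, Pi.one_apply]
    omega
  have hd1 : ∑ i, (m - 1) i ≤ 1 := by
    simp only [Pi.sub_apply, Pi.one_apply, sum_sub_distrib, sum_const, card_univ, nsmul_one]
    omega
  rcases eq_zero_or_eq_single_of_sum_le_one hd0 hd1 with h | ⟨j, h⟩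
  · exact Or.inr (Or.inl (sub_eq_zero.1 h))
  · exact Or.inr (Or.inr ⟨j, by rw [← h]; abel⟩)

end IntegerVectors

def motzkinVertices (n : ℕ) : Set (Fin n → ℝ) :=
  {0} ∪ {p | ∃ j : Fin n, p = fun i => if i = j then 4 else 2}

section Motzkin

variable {n : ℕ}

theorem sum_ite_eq_four_two (j : Fin n) :
    ∑ i : Fin n, (if i = j then (4 : ℝ) else 2) = 2 * n + 2 := by
  have h : ∀ i, (if i = j then (4 : ℝ) else 2) = 2 + if i = j then 2 else 0 := by
    intro i
    split_ifs <;> norm_num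
  simp only [h, sum_add_distrib, sum_ite_eq', mem_univ, if_true, sum_const, card_univ,
    Fintype.card_fin, nsmul_eq_mul]
  ring

theorem nonneg_of_mem_convexHull_motzkinVertices {x : Fin n → ℝ}
    (hx : x ∈ convexHull ℝ (motzkinVertices n)) (i : Fin n) : 0 ≤ x i := by
  have hlin : IsLinearMap ℝ fun y : Fin n → ℝ => -y i :=
    ⟨fun y z => by simp only [Pi.add_apply]; ring, fun c y => by simp⟩
  have := hlin.le_of_mem_convexHull (c := 0) ?_ hx
  · linarith
  rintro _ (rfl | ⟨j, rfl⟩)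
  · simp
  · dsimp only
    split_ifs <;> norm_num

theorem sum_le_of_mem_convexHull_motzkinVertices {x : Fin n → ℝ}
    (hx : x ∈ convexHull ℝ (motzkinVertices n)) : ∑ i, x i ≤ 2 * (n + 1) := by
  have hlin : IsLinearMap ℝ fun y : Fin n → ℝ => ∑ i, y i :=
    ⟨fun y z => by simp only [Pi.add_apply, sum_add_distrib],
      fun c y => by simp only [Pi.smul_apply, smul_eq_mul, ← mul_sum]⟩
  refine hlin.le_of_mem_convexHull ?_ hx
  rintro _ (rfl | ⟨j, rfl⟩)
  · simp only [Pi.zero_apply, sum_const_zero]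
    positivity
  · simp only [sum_ite_eq_four_two]
    linarith

theorem sum_le_mul_of_mem_convexHull_motzkinVertices {x : Fin n → ℝ}
    (hx : x ∈ convexHull ℝ (motzkinVertices n)) (k : Fin n) : ∑ i, x i ≤ (n + 1) * x k := by
  have hlin : IsLinearMap ℝ fun y : Fin n → ℝ => ∑ i, y i - (n + 1) * y k :=
    ⟨fun y z => by simp only [Pi.add_apply, sum_add_distrib]; ring,
      fun c y => by simp only [Pi.smul_apply, smul_eq_mul, ← mul_sum]; ring⟩
  have := hlin.le_of_mem_convexHull (c := 0) ?_ hx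
  · linarith
  rintro _ (rfl | ⟨j, rfl⟩)
  · simp
  · have := Nat.cast_nonneg (α := ℝ) n
    simp only [sum_ite_eq_four_two]
    split_ifs <;> nlinarith

theorem eq_of_two_mul_mem_convexHull_motzkinVertices {m : Fin n → ℤ}
    (hm : (fun i => 2 * (m i : ℝ)) ∈ convexHull ℝ (motzkinVertices n)) :
    m = 0 ∨ m = 1 ∨ ∃ j, m = 1 + Pi.single j 1 := by
  have hsum : ∑ i, 2 * (m i : ℝ) = 2 * ((∑ i, m i : ℤ) : ℝ) := by
    push_cast
    rw [mul_sum]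
  have h0 (i : Fin n) : 0 ≤ m i := by
    have := nonneg_of_mem_convexHull_motzkinVertices hm i
    exact_mod_cast (by linarith : (0 : ℝ) ≤ m i)
  have hle : ∑ i, m i ≤ Fintype.card (Fin n) + 1 := by
    have := sum_le_of_mem_convexHull_motzkinVertices hm
    rw [hsum] at this
    rw [Fintype.card_fin]
    exact_mod_cast (by linarith : ((∑ i, m i : ℤ) : ℝ) ≤ n + 1)
  have hfacet (k : Fin n) : ∑ i, m i ≤ (Fintype.card (Fin n) + 1) * m k := by
    have := sum_le_mul_of_mem_convexHull_motzkinVertices hm k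
    rw [hsum] at this
    rw [Fintype.card_fin]
    exact_mod_cast (by linarith : ((∑ i, m i : ℤ) : ℝ) ≤ (n + 1) * m k)
  exact eq_zero_or_eq_one_or_eq_one_add_single h0 hle hfacet

theorem two_mem_convexHull_motzkinVertices :
    (fun _ => 2) ∈ convexHull ℝ (motzkinVertices n) := by
  set v : Option (Fin n) → Fin n → ℝ := fun o => o.elim 0 fun j i => if i = j then 4 else 2
  have hcentroid : ∑ o, ((n : ℝ) + 1)⁻¹ • v o = fun _ => 2 := by
    funext i
    simp only [v, Finset.sum_apply, Fintype.sum_option, Option.elim, Pi.smul_apply,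
      Pi.zero_apply, zero_add, smul_eq_mul, ← mul_sum]
    simp_rw [eq_comm (a := i)]
    rw [sum_ite_eq_four_two]
    field_simp
  rw [← hcentroid]
  have hweights : ∑ _o : Option (Fin n), ((n : ℝ) + 1)⁻¹ = 1 := by
    simp only [sum_const, card_univ, Fintype.card_option, Fintype.card_fin, nsmul_eq_mul]
    push_cast
    field_simp
  refine (convex_convexHull ℝ _).sum_mem (fun _ _ => by positivity) hweights ?_
  rintro (_ | j) _
  · exact subset_convexHull ℝ _ (Or.inl rfl)
  · exact subset_convexHull ℝ _ (Or.inr ⟨j, rfl⟩)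

end Motzkin

theorem motzkin_even_lattice_points_general (n : ℕ) :
    let A : Set (Fin n → ℝ) :=
      {0} ∪ {p | ∃ j : Fin n, p = fun i => if i = j then 4 else 2}
    convexHull ℝ A ∩ {x : Fin n → ℝ | ∀ i, ∃ m : ℤ, x i = 2 * (m : ℝ)}
      = A ∪ {fun _ => 2} := by
  intro A
  ext x
  constructor
  · rintro ⟨hx, heven⟩
    choose m hm using heven
    obtain rfl : x = fun i => 2 * (m i : ℝ) := funext hm
    rcases eq_of_two_mul_mem_convexHull_motzkinVertices hx with rfl | rfl | ⟨j, rfl⟩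
    · exact Or.inl (Or.inl (funext fun i => by simp))
    · exact Or.inr (funext fun i => by simp)
    · refine Or.inl (Or.inr ⟨j, funext fun i => ?_⟩)
      by_cases hij : i = j <;> norm_num [hij]
  · rintro ((rfl | ⟨j, rfl⟩) | rfl)
    · exact ⟨subset_convexHull ℝ _ (Or.inl rfl), fun _ => ⟨0, by simp⟩⟩
    · refine ⟨subset_convexHull ℝ _ (Or.inr ⟨j, rfl⟩), fun i => ⟨if i = j then 2 else 1, ?_⟩⟩
      by_cases hij : i = j <;> norm_num [hij]
    · exact ⟨two_mem_convexHull_motzkinVertices, fun _ => ⟨1, by norm_num⟩⟩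

/-- For every `n ≥ 2`, the even lattice points of the Newton polytope of
the generalized Motzkin polynomial are exactly its vertices together with the inner
exponent `2e`. -/
theorem motzkin_even_lattice_points (n : ℕ) (hn : 2 ≤ n) :
    let A : Set (Fin n → ℝ) :=
      {0} ∪ {p | ∃ j : Fin n, p = fun i => if i = j then 4 else 2}
    convexHull ℝ A ∩ {x : Fin n → ℝ | ∀ i, ∃ m : ℤ, x i = 2 * (m : ℝ)}
      = A ∪ {fun _ => 2} :=
  motzkin_even_lattice_points_general n
end

section
/- For every n ≥ 2, the point 2e is not the midpoint of two distinct even lattice points of the Newton polytope of the generalized Motzkin polynomial: there do not exist u ≠ v with u, v ∈ conv({0} ∪ {2(e+e_j) : j ∈ [n]}) ∩ (2ℤ)ⁿ and (u+v)/2 = 2e. -/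
open MvPolynomial Finset

lemma sum_ite_eval (n : ℕ) (j : Fin n) :
    (∑ k : Fin n, (if k = j then (4 : ℝ) else 2)) = 2 * n + 2 := by
  have h : ∀ k : Fin n, (if k = j then (4 : ℝ) else 2) = 2 + (if k = j then 2 else 0) := by
    intro k; split <;> norm_num
  simp only [h, Finset.sum_add_distrib, Finset.sum_const, Finset.card_fin,
    Finset.sum_ite_eq' Finset.univ j, Finset.mem_univ, if_true]
  push_cast; ring

lemma motzkin_hull_subset (n : ℕ) :
    convexHull ℝ ({0} ∪ {p | ∃ j : Fin n, p = fun i => if i = j then 4 else 2} :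
      Set (Fin n → ℝ)) ⊆
    {x : Fin n → ℝ | (∑ k, x k) ≤ 2 * (n + 1) ∧ ∀ i, (∑ k, x k) ≤ (n + 1) * x i} := by
  apply convexHull_min
  · rintro x (rfl | ⟨j, rfl⟩)
    · refine ⟨by simp; positivity, fun i => by simp⟩
    · refine ⟨by rw [sum_ite_eval]; ring_nf; linarith, fun i => ?_⟩
      rw [sum_ite_eval]
      show 2 * (n:ℝ) + 2 ≤ (n + 1) * (if i = j then 4 else 2)
      by_cases h : i = j <;> simp [h] <;> nlinarith [Nat.cast_nonneg (α := ℝ) n]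
  · rintro x ⟨hx1, hx2⟩ y ⟨hy1, hy2⟩ a b ha hb hab
    have hsum : (∑ k, (a • x + b • y) k) = a * (∑ k, x k) + b * (∑ k, y k) := by
      simp [Finset.sum_add_distrib, Finset.mul_sum]
    constructor
    · rw [hsum]; nlinarith
    · intro i
      rw [hsum]
      have : (a • x + b • y) i = a * x i + b * y i := by simp
      rw [this]
      nlinarith [hx2 i, hy2 i]

lemma motzkin_aux_false (n : ℕ) (hn : 2 ≤ n) (u v : Fin n → ℝ)
    (hv1 : ∑ k, v k ≤ 2 * (n + 1)) (hu2 : ∀ i, ∑ k, u k ≤ (n + 1) * u i)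
    (i : Fin n) (hui : u i = 0) (hsum : ∀ k, u k + v k = 4) : False := by
  have hn' : (2 : ℝ) ≤ n := by exact_mod_cast hn
  -- sum of u is nonneg
  have h1 : (n : ℝ) * (∑ k, u k) ≤ ((n : ℝ) + 1) * (∑ k, u k) := by
    have := Finset.sum_le_sum (fun k (_ : k ∈ Finset.univ) => hu2 k)
    rw [Finset.sum_const, Finset.card_fin, nsmul_eq_mul, ← Finset.mul_sum] at this
    exact this
  have hSu : (0 : ℝ) ≤ ∑ k, u k := by nlinarith
  -- but sum of u ≤ 0 from coordinate i
  have hSu0 : (∑ k, u k) ≤ 0 := by have := hu2 i; rw [hui] at this; linarith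
  -- sum u + sum v = 4n
  have htot : (∑ k, u k) + (∑ k, v k) = 4 * n := by
    rw [← Finset.sum_add_distrib]
    simp [hsum]; ring
  nlinarith

/-- For every `n ≥ 2`, the point `2e` is not the midpoint of two distinct
even lattice points of the Newton polytope of the generalized Motzkin polynomial. -/
theorem motzkin_inner_point_no_midpoint (n : ℕ) (hn : 2 ≤ n) :
    let A : Set (Fin n → ℝ) :=
      {0} ∪ {p | ∃ j : Fin n, p = fun i => if i = j then 4 else 2}
    let E : Set (Fin n → ℝ) := {x | ∀ i, ∃ m : ℤ, x i = 2 * (m : ℝ)}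
    ¬ ∃ u v : Fin n → ℝ, u ≠ v ∧
      u ∈ convexHull ℝ A ∩ E ∧ v ∈ convexHull ℝ A ∩ E ∧
      midpoint ℝ u v = (fun _ => 2) := by
  intro A E
  rintro ⟨u, v, huv, ⟨huA, huE⟩, ⟨hvA, hvE⟩, hmid⟩
  have hu := motzkin_hull_subset n huA
  have hv := motzkin_hull_subset n hvA
  have hsum : ∀ k, u k + v k = 4 := by
    intro k
    have := congrFun hmid k
    rw [midpoint_eq_smul_add] at this
    simp at this
    linarith
  -- nonnegativity of coordinates
  have hSu : (0 : ℝ) ≤ ∑ k, u k := by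
    have h1 : (n : ℝ) * (∑ k, u k) ≤ ((n : ℝ) + 1) * (∑ k, u k) := by
      have := Finset.sum_le_sum (fun k (_ : k ∈ Finset.univ) => hu.2 k)
      rw [Finset.sum_const, Finset.card_fin, nsmul_eq_mul, ← Finset.mul_sum] at this
      exact this
    nlinarith
  have hSv : (0 : ℝ) ≤ ∑ k, v k := by
    have h1 : (n : ℝ) * (∑ k, v k) ≤ ((n : ℝ) + 1) * (∑ k, v k) := by
      have := Finset.sum_le_sum (fun k (_ : k ∈ Finset.univ) => hv.2 k)
      rw [Finset.sum_const, Finset.card_fin, nsmul_eq_mul, ← Finset.mul_sum] at this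
      exact this
    nlinarith
  have hnpos : (0 : ℝ) < (n : ℝ) + 1 := by positivity
  have hunn : ∀ k, 0 ≤ u k := fun k => nonneg_of_mul_nonneg_right (le_trans hSu (hu.2 k)) hnpos
  have hvnn : ∀ k, 0 ≤ v k := fun k => nonneg_of_mul_nonneg_right (le_trans hSv (hv.2 k)) hnpos
  obtain ⟨i, hi⟩ := Function.ne_iff.mp huv
  obtain ⟨a, ha⟩ := huE i
  obtain ⟨b, hb⟩ := hvE i
  have hab : a + b = 2 := by
    have h4 := hsum i
    rw [ha, hb] at h4
    have : ((a + b : ℤ) : ℝ) = 2 := by push_cast; linarith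
    exact_mod_cast this
  have hane : a ≠ b := by rintro rfl; exact hi (ha.trans hb.symm)
  have ha0 : 0 ≤ a := by
    have := hunn i; rw [ha] at this
    exact_mod_cast nonneg_of_mul_nonneg_right this (by norm_num : (0:ℝ) < 2)
  have hb0 : 0 ≤ b := by
    have := hvnn i; rw [hb] at this
    exact_mod_cast nonneg_of_mul_nonneg_right this (by norm_num : (0:ℝ) < 2)
  have hcase : a = 0 ∨ b = 0 := by omega
  rcases hcase with rfl | rfl
  · exact motzkin_aux_false n hn u v hv.1 hu.2 i (by rw [ha]; norm_num) hsum
  · exact motzkin_aux_false n hn v u hu.1 hv.2 i (by rw [hb]; norm_num)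
      (fun k => by linarith [hsum k])
end

section
/- For every n ≥ 2, the signed quadric N_n = (1 − Σ_{j=1}^n x_j)² is not a SONC, i.e., N_n cannot be written as a finite sum of nonnegative circuit polynomials. -/
open MvPolynomial Finset

open Filter in
private lemma one_var (s : ℝ) (hs : 0 < s) (r : ℕ) (e : Fin (r+1) → ℝ) (he : ∀ j, 0 < e j)
    (a b : Fin (r+1) → ℕ) (w : ℝ) (P Q : ℕ) (lam : Fin (r+1) → ℝ)
    (hlam : ∀ j, 0 < lam j) (hlsum : ∑ j, lam j = 1)
    (hP : (P : ℝ) = ∑ j, lam j * (a j : ℝ))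
    (hF : ∀ t ∈ Set.Ioo (0:ℝ) s,
      w * t^P * (s-t)^Q + ∑ j, e j * t^(a j) * (s-t)^(b j) = 0) :
    ∀ j j', a j = a j' := by
  obtain ⟨j₀, -, hj₀⟩ := Finset.exists_min_image Finset.univ a ⟨0, Finset.mem_univ 0⟩
  simp only [Finset.mem_univ, forall_const] at hj₀
  suffices h : ∀ j, a j = a j₀ by intro j j'; rw [h j, h j']
  by_contra hc
  push_neg at hc
  obtain ⟨j₁, hj₁⟩ := hc
  have hj₁' : a j₀ < a j₁ := lt_of_le_of_ne (hj₀ j₁) (Ne.symm hj₁)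
  set μ := a j₀ with hμ
  have hμP : μ < P := by
    have h1 : (μ:ℝ) < P := by
      rw [hP]
      calc (μ:ℝ) = ∑ j, lam j * (μ:ℝ) := by rw [← Finset.sum_mul, hlsum, one_mul]
      _ < ∑ j, lam j * (a j : ℝ) := by
          refine Finset.sum_lt_sum (fun j _ => ?_) ⟨j₁, Finset.mem_univ _, ?_⟩
          · have := hj₀ j
            have h2 : (μ:ℝ) ≤ a j := by exact_mod_cast this
            nlinarith [hlam j]
          · have h2 : (μ:ℝ) < a j₁ := by exact_mod_cast hj₁'
            nlinarith [hlam j₁]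
    exact_mod_cast h1
  set G : ℝ → ℝ := fun t => w * t^(P-μ) * (s-t)^Q + ∑ j, e j * t^(a j - μ) * (s-t)^(b j)
    with hG
  have hG0 : ∀ t ∈ Set.Ioo (0:ℝ) s, G t = 0 := by
    intro t ht
    have ht0 : t ≠ 0 := ne_of_gt ht.1
    have key : t^μ * G t = 0 := by
      rw [← hF t ht, hG]
      simp only
      rw [mul_add, Finset.mul_sum]
      congr 1
      · rw [show t^P = t^μ * t^(P-μ) by rw [← pow_add]; congr 1; omega]; ring
      · refine Finset.sum_congr rfl fun j _ => ?_
        rw [show t^(a j) = t^μ * t^(a j - μ) by rw [← pow_add]; congr 1; exact (Nat.add_sub_cancel' (hj₀ j)).symm]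
        ring
    exact (mul_eq_zero.mp key).resolve_left (pow_ne_zero _ ht0)
  have hGc : Continuous G := by fun_prop
  have h1 : Tendsto G (nhdsWithin 0 (Set.Ioi 0)) (nhds (G 0)) :=
    (hGc.tendsto 0).mono_left nhdsWithin_le_nhds
  have h2 : Tendsto G (nhdsWithin 0 (Set.Ioi 0)) (nhds 0) := by
    have hev : ∀ᶠ t in nhdsWithin (0:ℝ) (Set.Ioi 0), G t = 0 :=
      Filter.mem_of_superset (Ioo_mem_nhdsGT_of_mem ⟨le_refl 0, hs⟩) hG0
    exact Tendsto.congr' (by filter_upwards [hev] with t ht; exact ht.symm) tendsto_const_nhds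
  have hG00 : G 0 = 0 := tendsto_nhds_unique h1 h2
  have hval : G 0 = ∑ j, e j * (0:ℝ)^(a j - μ) * s^(b j) := by
    rw [hG]
    simp only
    rw [zero_pow (by omega : P - μ ≠ 0)]
    simp
  have hpos : 0 < ∑ j, e j * (0:ℝ)^(a j - μ) * s^(b j) := by
    refine Finset.sum_pos' (fun j _ => ?_) ⟨j₀, Finset.mem_univ _, ?_⟩
    · have : (0:ℝ) ≤ (0:ℝ)^(a j - μ) := by positivity
      have := (he j).le
      positivity
    · rw [show a j₀ - μ = 0 by omega, pow_zero, mul_one]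
      exact mul_pos (he j₀) (pow_pos hs _)
  rw [hG00] at hval
  linarith

private lemma circuit_vanish {n : ℕ} (hn : 2 ≤ n) (p : MvPolynomial (Fin n) ℝ)
    (hc : IsCircuit p)
    (hv : ∀ x : Fin n → ℝ, (∀ i, 0 < x i) → (∑ i, x i) = 1 → eval x p = 0) :
    p = 0 := by
  have hn0 : (0:ℝ) < n := by positivity
  have hnn : (n:ℝ) ≠ 0 := ne_of_gt hn0
  -- the uniform point
  have hupos : ∀ i : Fin n, (0:ℝ) < (fun _ : Fin n => 1/(n:ℝ)) i := fun i => by positivity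
  have husum : ∑ i : Fin n, (1/(n:ℝ)) = 1 := by
    rw [Finset.sum_const, card_univ, Fintype.card_fin, nsmul_eq_mul]
    field_simp
  have hprod_fin : ∀ (y : Fin n → ℝ) (γ : Fin n →₀ ℕ),
      (γ.prod fun i e => y i ^ e) = ∏ i, y i ^ γ i :=
    fun y γ => Finsupp.prod_fintype _ _ (fun i => pow_zero _)
  rcases hc with ⟨w, c, hc0, rfl⟩ | ⟨r, hr, α, c, β, fβ, lam, hcpos, heven, haff, hlam, hlsum, hβ, rfl⟩
  · -- degenerate monomial square
    have := hv (fun _ => 1/(n:ℝ)) hupos husum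
    rw [eval_monomial, hprod_fin] at this
    have hposprod : (0:ℝ) < ∏ i, (1/(n:ℝ)) ^ ((2 • w) i) :=
      Finset.prod_pos fun i _ => pow_pos (by positivity) _
    have hc' : c = 0 := by
      rcases mul_eq_zero.mp this with h | h
      · exact h
      · exact absurd h (ne_of_gt hposprod)
    rw [hc']
    simp
  · -- nondegenerate circuit
    have heval : ∀ y : Fin n → ℝ,
        eval y (monomial β fβ + ∑ j, monomial (α j) (c j))
          = fβ * ∏ i, y i ^ β i + ∑ j, c j * ∏ i, y i ^ α j i := by
      intro y
      rw [map_add, map_sum, eval_monomial, hprod_fin]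
      congr 1
      refine Finset.sum_congr rfl fun j _ => ?_
      rw [eval_monomial, hprod_fin]
    have hαconst : ∀ k : Fin n, ∀ j, α j k = α 0 k := by
      intro k
      obtain ⟨m, hm⟩ : ∃ m : Fin n, m ≠ k := by
        rcases eq_or_ne k ⟨0, by omega⟩ with h | h
        · exact ⟨⟨1, by omega⟩, by rw [h]; simp [Fin.ext_iff]⟩
        · exact ⟨⟨0, by omega⟩, fun h' => h h'.symm⟩
      set s : ℝ := 2/(n:ℝ) with hsdef
      have hs : 0 < s := by positivity
      set x : ℝ → Fin n → ℝ :=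
        fun t i => if i = k then t else if i = m then s - t else 1/(n:ℝ) with hx
      set D : (Fin n →₀ ℕ) → ℝ :=
        fun γ => ∏ i ∈ (Finset.univ.erase k).erase m, (1/(n:ℝ))^(γ i) with hD
      have hDpos : ∀ γ, 0 < D γ := fun γ =>
        Finset.prod_pos fun i _ => pow_pos (by positivity) _
      have hmem : m ∈ Finset.univ.erase k := Finset.mem_erase.mpr ⟨hm, Finset.mem_univ m⟩
      have hrest : ∀ i ∈ (Finset.univ.erase k).erase m, ∀ t, x t i = 1/(n:ℝ) := by
        intro i hi t
        obtain ⟨him, hik⟩ := Finset.mem_erase.mp hi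
        obtain ⟨hik', -⟩ := Finset.mem_erase.mp hik
        simp [hx, hik', him]
      have hcard : ((Finset.univ.erase k).erase m).card = n - 2 := by
        rw [Finset.card_erase_of_mem hmem, Finset.card_erase_of_mem (Finset.mem_univ k),
          card_univ, Fintype.card_fin]
        omega
      have hxk : ∀ t, x t k = t := fun t => by simp [hx]
      have hxm : ∀ t, x t m = s - t := fun t => by simp [hx, hm]
      have hsum1 : ∀ t, ∑ i, x t i = 1 := by
        intro t
        rw [← Finset.add_sum_erase Finset.univ _ (Finset.mem_univ k),
          ← Finset.add_sum_erase _ _ hmem, hxk, hxm,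
          Finset.sum_congr rfl (fun i hi => hrest i hi t), Finset.sum_const, hcard,
          nsmul_eq_mul]
        have h2 : ((n - 2 : ℕ) : ℝ) = (n:ℝ) - 2 := by
          rw [Nat.cast_sub hn]; norm_num
        rw [h2, hsdef]
        field_simp
        ring
      have hprodx : ∀ (γ : Fin n →₀ ℕ) (t : ℝ),
          (∏ i, (x t i)^(γ i)) = t^(γ k) * (s-t)^(γ m) * D γ := by
        intro γ t
        rw [← Finset.mul_prod_erase Finset.univ _ (Finset.mem_univ k),
          ← Finset.mul_prod_erase _ _ hmem, hxk, hxm,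
          Finset.prod_congr rfl (fun i hi => by rw [hrest i hi t]), hD, mul_assoc]
      have hF : ∀ t ∈ Set.Ioo (0:ℝ) s,
          (fβ * D β) * t^(β k) * (s-t)^(β m)
            + ∑ j, (c j * D (α j)) * t^(α j k) * (s-t)^(α j m) = 0 := by
        intro t ht
        have hxpos : ∀ i, 0 < x t i := by
          intro i
          rw [hx]
          simp only
          split
          · exact ht.1
          · split
            · linarith [ht.2]
            · positivity
        have h0 := hv (x t) hxpos (hsum1 t)
        rw [heval] at h0
        rw [← h0, hprodx]
        congr 1
        · ring
        · refine Finset.sum_congr rfl fun j _ => ?_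
          rw [hprodx]; ring
      have := one_var s hs r (fun j => c j * D (α j))
        (fun j => mul_pos (hcpos j) (hDpos (α j)))
        (fun j => α j k) (fun j => α j m) (fβ * D β) (β k) (β m) lam hlam hlsum
        (hβ k) hF
      exact fun j => this j 0
    -- all α j are equal
    have hαeq : ∀ j, α j = α 0 := by
      intro j
      ext i
      exact hαconst i j
    rcases Nat.eq_zero_or_pos r with h0 | h1
    · -- r = 0 : single monomial
      subst h0
      have hl0 : lam 0 = 1 := by rw [← hlsum]; simp
      have hβα : β = α 0 := by
        ext i
        have := hβ i
        rw [Fin.sum_univ_one, hl0, one_mul] at this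
        exact_mod_cast this
      have hpsum : (monomial β) fβ + ∑ j : Fin 1, (monomial (α j)) (c j)
          = monomial β (fβ + c 0) := by
        rw [Fin.sum_univ_one, hβα, ← map_add]
      rw [hpsum]
      have := hv (fun _ => 1/(n:ℝ)) hupos husum
      rw [hpsum, eval_monomial, hprod_fin] at this
      have hposprod : (0:ℝ) < ∏ i, (1/(n:ℝ)) ^ (β i) :=
        Finset.prod_pos fun i _ => pow_pos (by positivity) _
      have hz : fβ + c 0 = 0 := by
        rcases mul_eq_zero.mp this with h | h
        · exact h
        · exact absurd h (ne_of_gt hposprod)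
      rw [hz]; simp
    · -- r ≥ 1 : contradiction with affine independence
      exfalso
      have h01 : (0 : Fin (r+1)) ≠ (1 : Fin (r+1)) := by
        simp [Fin.ext_iff]
        omega
      apply h01
      apply haff.injective
      funext i
      simp only
      rw [hαeq 1]

/-- For every `n ≥ 2`, the signed quadric `N_n = (1 − Σ x_j)²` is not a
sum of nonnegative circuit polynomials. -/
theorem signed_quadric_not_sonc (n : ℕ) (hn : 2 ≤ n) :
    SignedQuadric n ∉ SONCset n := by
  rintro ⟨k, μ, p, hμ, hp, hsum⟩
  have hNeval : ∀ x : Fin n → ℝ, eval x (SignedQuadric n) = (1 - ∑ j, x j)^2 := by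
    intro x
    simp [SignedQuadric]
  have hzero : ∀ i, μ i • p i = 0 := by
    intro i
    rcases eq_or_lt_of_le (hμ i) with h | h
    · rw [← h, zero_smul]
    · have hpz : p i = 0 := by
        refine circuit_vanish hn _ (hp i).1 (fun x hx hx1 => ?_)
        have h0 : ∑ j, μ j * eval x (p j) = 0 := by
          have := hNeval x
          rw [hsum, map_sum] at this
          simp_rw [smul_eval] at this
          rw [this, hx1]
          ring
        have hterms : ∀ j ∈ Finset.univ, (0:ℝ) ≤ μ j * eval x (p j) :=
          fun j _ => mul_nonneg (hμ j) ((hp j).2 x)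
        have hi := (Finset.sum_eq_zero_iff_of_nonneg hterms).mp h0 i (Finset.mem_univ i)
        exact (mul_eq_zero.mp hi).resolve_left (ne_of_gt h)
      rw [hpz, smul_zero]
  have hN0 : SignedQuadric n = 0 := by
    rw [hsum]
    exact Finset.sum_eq_zero fun i _ => hzero i
  have h1 : eval (fun _ => (0:ℝ)) (SignedQuadric n) = 1 := by rw [hNeval]; simp
  rw [hN0] at h1
  simp at h1
end

section
/- Every square of a binomial is a nonnegative circuit polynomial: for all distinct exponent vectors u, v ∈ ℕⁿ and all nonzero reals a, b, the polynomial (a·x^u + b·x^v)² is a nonnegative circuit polynomial. Consequently every scaled diagonally dominant polynomial, i.e., every finite sum of squares of binomials, is a SONC: 𝕊𝔻𝕊𝕆𝕊 ⊆ 𝕊𝕆ℕℂ. -/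
open MvPolynomial Finset

theorem binom_sq_expand {n : ℕ} (u v : Fin n →₀ ℕ) (a b : ℝ) :
    (monomial u a + monomial v b)^2
      = monomial (u+v) (2*(a*b)) + (monomial (2•u) (a^2) + monomial (2•v) (b^2)) := by
  rw [add_sq, monomial_pow, monomial_pow, mul_assoc, monomial_mul, two_mul, two_mul, ← map_add]
  ring

theorem binom_sq_nonneg_circuit {n : ℕ} (u v : Fin n →₀ ℕ) (huv : u ≠ v) (a b : ℝ)
    (ha : a ≠ 0) (hb : b ≠ 0) :
    IsNonnegCircuit ((monomial u a + monomial v b)^2) := by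
  refine ⟨?_, fun x => by rw [map_pow]; exact sq_nonneg _⟩
  right
  have hn : 1 ≤ n := by
    rcases Nat.eq_zero_or_pos n with h | h
    · subst h; exact absurd (Subsingleton.elim u v) huv
    · exact h
  refine ⟨1, hn, ![2•u, 2•v], ![a^2, b^2], u+v, 2*(a*b), ![1/2, 1/2],
    ?_, ?_, ?_, ?_, ?_, ?_, ?_⟩
  · intro j; fin_cases j <;>
      simp [pow_pos, pow_two_pos_of_ne_zero, ha, hb]
  · intro j i; fin_cases j <;>
      · simp only [Matrix.cons_val_zero, Matrix.cons_val_one, Matrix.head_cons,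
          Finsupp.smul_apply, smul_eq_mul]
        exact even_two_mul _
  · have h : (fun j : Fin 2 => (fun i => (((![2•u, 2•v] : Fin 2 → (Fin n →₀ ℕ)) j i : ℕ) : ℝ)))
        = ![(fun i => (((2•u : Fin n →₀ ℕ) i : ℕ) : ℝ)),
            (fun i => (((2•v : Fin n →₀ ℕ) i : ℕ) : ℝ))] := by
      funext j; fin_cases j <;> rfl
    rw [h]
    apply affineIndependent_of_ne
    obtain ⟨i, hi⟩ := Finsupp.ne_iff.mp huv
    intro hcon
    apply hi
    have := congrFun hcon i
    simp [Finsupp.smul_apply] at this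
    exact_mod_cast this
  · intro j; fin_cases j <;> norm_num
  · norm_num [Fin.sum_univ_succ]
  · intro i
    simp only [Fin.sum_univ_succ, Fin.sum_univ_zero, Matrix.cons_val_zero, Matrix.cons_val_one,
      Matrix.head_cons, Finsupp.add_apply, Finsupp.smul_apply, smul_eq_mul, Fin.succ_zero_eq_one,
      add_zero]
    push_cast
    ring
  · rw [binom_sq_expand, Fin.sum_univ_succ, Fin.sum_univ_succ, Fin.sum_univ_zero]
    simp

theorem binom_sq_nonneg_circuit' {n : ℕ} (u v : Fin n →₀ ℕ) (a b : ℝ) :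
    IsNonnegCircuit ((monomial u a + monomial v b)^2) := by
  by_cases huv : u = v
  · subst huv
    refine ⟨Or.inl ⟨u, (a+b)^2, sq_nonneg _, ?_⟩, fun x => by rw [map_pow]; exact sq_nonneg _⟩
    rw [← map_add, monomial_pow]
  by_cases ha : a = 0
  · subst ha
    refine ⟨Or.inl ⟨v, b^2, sq_nonneg _, ?_⟩, fun x => by rw [map_pow]; exact sq_nonneg _⟩
    rw [map_zero, zero_add, monomial_pow]
  by_cases hb : b = 0
  · subst hb
    refine ⟨Or.inl ⟨u, a^2, sq_nonneg _, ?_⟩, fun x => by rw [map_pow]; exact sq_nonneg _⟩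
    rw [map_zero, add_zero, monomial_pow]
  exact binom_sq_nonneg_circuit u v huv a b ha hb

/-- Every square of a binomial is a nonnegative circuit polynomial, and
consequently `𝕊𝔻𝕊𝕆𝕊 ⊆ 𝕊𝕆ℕℂ`. -/
theorem sdsos_subset_sonc (n : ℕ) :
    (∀ u v : Fin n →₀ ℕ, u ≠ v → ∀ a b : ℝ, a ≠ 0 → b ≠ 0 →
      IsNonnegCircuit
        ((MvPolynomial.monomial u a + MvPolynomial.monomial v b) ^ 2)) ∧
    SDSOSset n ⊆ SONCset n := by
  constructor
  · exact fun u v huv a b ha hb => binom_sq_nonneg_circuit u v huv a b ha hb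
  · rintro f ⟨k, a, b, u, v, rfl⟩
    exact ⟨k, fun _ => 1, fun i => (monomial (u i) (a i) + monomial (v i) (b i))^2,
      fun _ => zero_le_one, fun i => binom_sq_nonneg_circuit' _ _ _ _, by simp⟩
end

section
/- There is no Putinar-like Positivstellensatz for SDSOS: there exist n ∈ ℕ, a polynomial f ∈ ℝ[x₁,…,xₙ], and a finite constraint set 𝒢 = {g₀ = 1, g₁, …, g_s} ⊂ ℝ[x₁,…,xₙ] such that preprime(𝒢) is Archimedean (in particular 𝒢₊ is compact and nonempty), f(x) > 0 for all x ∈ 𝒢₊, and yet for every d ∈ ℕ we have f ∉ H(𝕊𝔻𝕊𝕆𝕊, 𝒢, 2d). -/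
open MvPolynomial Finset

/-! ### Auxiliary material for the proof of `no_putinar_for_sdsos` -/

noncomputable section SpxAux

/-- First box constraint `1 - x₀²`. -/
def spxA : MvPolynomial (Fin 2) ℝ := 1 - X 0 ^ 2

/-- Second box constraint `1 - x₁²`. -/
def spxB : MvPolynomial (Fin 2) ℝ := 1 - X 1 ^ 2

/-- The constraint set `{1, 1 - x₀², 1 - x₁²}`. -/
def spxG : Finset (MvPolynomial (Fin 2) ℝ) := {1, spxA, spxB}

/-- The counterexample polynomial `20 + 2x₀ + 2x₁ + 19x₀x₁`. -/
def spxF : MvPolynomial (Fin 2) ℝ :=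
  C 20 + C 2 * X 0 + C 2 * X 1 + C 19 * (X 0 * X 1)

lemma spxA_ne_one : spxA ≠ 1 := by
  intro h
  have h2 := congrArg (eval fun _ : Fin 2 => (2 : ℝ)) h
  simp [spxA] at h2

lemma spxB_ne_one : spxB ≠ 1 := by
  intro h
  have h2 := congrArg (eval fun _ : Fin 2 => (2 : ℝ)) h
  simp [spxB] at h2

lemma spxA_ne_spxB : spxA ≠ spxB := by
  intro h
  have h2 := congrArg (eval (![2, 0] : Fin 2 → ℝ)) h
  simp [spxA, spxB] at h2

lemma spx_mem_feas {x : Fin 2 → ℝ} :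
    x ∈ feasSet spxG ↔ |x 0| ≤ 1 ∧ |x 1| ≤ 1 := by
  constructor
  · intro h
    have hA := h spxA (by simp [spxG])
    have hB := h spxB (by simp [spxG])
    simp [spxA, spxB] at hA hB
    exact ⟨hA, hB⟩
  · rintro ⟨h0, h1⟩ g hg
    simp only [spxG, Finset.mem_insert, Finset.mem_singleton] at hg
    rcases hg with rfl | rfl | rfl
    · simp
    · simpa [spxA] using h0
    · simpa [spxB] using h1

lemma spx_feas_eq :
    feasSet spxG = Set.pi Set.univ (fun _ : Fin 2 => Set.Icc (-1 : ℝ) 1) := by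
  ext x
  rw [Set.mem_univ_pi]
  rw [show x ∈ feasSet spxG ↔ |x 0| ≤ 1 ∧ |x 1| ≤ 1 from spx_mem_feas]
  constructor
  · rintro ⟨h0, h1⟩ i
    fin_cases i <;> rw [Set.mem_Icc, ← abs_le] <;> assumption
  · intro h
    have h0 := h 0
    have h1 := h 1
    rw [Set.mem_Icc, ← abs_le] at h0 h1
    exact ⟨h0, h1⟩

lemma spx_eval_monomial_two (x : Fin 2 → ℝ) (u : Fin 2 →₀ ℕ) (a : ℝ) :
    eval x (monomial u a) = a * (x 0 ^ u 0 * x 1 ^ u 1) := by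
  rw [eval_monomial, Finsupp.prod_pow, Fin.prod_univ_two]

lemma spx_sq_combo (a b p q r s : ℝ)
    (hp : p = 1 ∨ p = -1) (hq : q = 1 ∨ q = -1)
    (hr : r = 1 ∨ r = -1) (hs : s = 1 ∨ s = -1) :
    0 ≤ -(a + b) ^ 2 + (a * q + b * s) ^ 2 + (a * p + b * r) ^ 2
        + (a * (p * q) + b * (r * s)) ^ 2 := by
  rcases hp with rfl | rfl <;> rcases hq with rfl | rfl <;>
    rcases hr with rfl | rfl <;> rcases hs with rfl | rfl <;>
    nlinarith [sq_nonneg (a + b), sq_nonneg (a - b)]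

lemma spx_L_sdsos (φ : MvPolynomial (Fin 2) ℝ) (hφ : φ ∈ SDSOSset 2) :
    0 ≤ - eval ![1, 1] φ + eval ![1, -1] φ + eval ![-1, 1] φ
        + eval ![-1, -1] φ := by
  obtain ⟨k, a, b, u, v, rfl⟩ := hφ
  rw [map_sum, map_sum, map_sum, map_sum, ← Finset.sum_neg_distrib,
    ← Finset.sum_add_distrib, ← Finset.sum_add_distrib, ← Finset.sum_add_distrib]
  apply Finset.sum_nonneg
  intro j _
  have h1 : eval (![1, 1] : Fin 2 → ℝ)
      ((monomial (u j) (a j) + monomial (v j) (b j)) ^ 2) = (a j + b j) ^ 2 := by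
    rw [map_pow, map_add, spx_eval_monomial_two, spx_eval_monomial_two]
    norm_num
  have h2 : eval (![1, -1] : Fin 2 → ℝ)
      ((monomial (u j) (a j) + monomial (v j) (b j)) ^ 2)
      = (a j * (-1 : ℝ) ^ (u j 1) + b j * (-1 : ℝ) ^ (v j 1)) ^ 2 := by
    rw [map_pow, map_add, spx_eval_monomial_two, spx_eval_monomial_two]
    norm_num
  have h3 : eval (![-1, 1] : Fin 2 → ℝ)
      ((monomial (u j) (a j) + monomial (v j) (b j)) ^ 2)
      = (a j * (-1 : ℝ) ^ (u j 0) + b j * (-1 : ℝ) ^ (v j 0)) ^ 2 := by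
    rw [map_pow, map_add, spx_eval_monomial_two, spx_eval_monomial_two]
    norm_num
  have h4 : eval (![-1, -1] : Fin 2 → ℝ)
      ((monomial (u j) (a j) + monomial (v j) (b j)) ^ 2)
      = (a j * ((-1 : ℝ) ^ (u j 0) * (-1 : ℝ) ^ (u j 1))
        + b j * ((-1 : ℝ) ^ (v j 0) * (-1 : ℝ) ^ (v j 1))) ^ 2 := by
    rw [map_pow, map_add, spx_eval_monomial_two, spx_eval_monomial_two]
    norm_num
  rw [h1, h2, h3, h4]
  exact spx_sq_combo (a j) (b j) _ _ _ _
    (neg_one_pow_eq_or ℝ (u j 0)) (neg_one_pow_eq_or ℝ (u j 1))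
    (neg_one_pow_eq_or ℝ (v j 0)) (neg_one_pow_eq_or ℝ (v j 1))

lemma spx_arch :
    (MvPolynomial.C ((2 : ℕ) : ℝ) - ∑ i : Fin 2, MvPolynomial.X i ^ 2)
      ∈ preprime spxG := by
  have hprod : ∀ e : MvPolynomial (Fin 2) ℝ → ℕ,
      (∏ g ∈ spxG, g ^ e g) = 1 ^ e 1 * (spxA ^ e spxA * spxB ^ e spxB) := by
    intro e
    have hmem1 : (1 : MvPolynomial (Fin 2) ℝ) ∉ ({spxA, spxB} :
        Finset (MvPolynomial (Fin 2) ℝ)) := by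
      simp only [Finset.mem_insert, Finset.mem_singleton]
      push_neg
      exact ⟨Ne.symm spxA_ne_one, Ne.symm spxB_ne_one⟩
    have hmem2 : spxA ∉ ({spxB} : Finset (MvPolynomial (Fin 2) ℝ)) := by
      simp only [Finset.mem_singleton]
      exact spxA_ne_spxB
    rw [show spxG = insert 1 (insert spxA {spxB}) from rfl,
      Finset.prod_insert hmem1, Finset.prod_insert hmem2, Finset.prod_singleton]
  refine ⟨2, ![1, 1],
    ![fun g => if g = spxA then 1 else 0, fun g => if g = spxB then 1 else 0],
    ?_, ?_⟩
  · intro i; fin_cases i <;> norm_num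
  · rw [Fin.sum_univ_two]
    have e0 : (∏ g ∈ spxG, g ^ (if g = spxA then 1 else 0)) = spxA := by
      rw [hprod]
      rw [if_neg (Ne.symm spxA_ne_one), if_pos rfl, if_neg (Ne.symm spxA_ne_spxB)]
      simp
    have e1 : (∏ g ∈ spxG, g ^ (if g = spxB then 1 else 0)) = spxB := by
      rw [hprod]
      rw [if_neg (Ne.symm spxB_ne_one), if_neg spxA_ne_spxB, if_pos rfl]
      simp
    simp only [Matrix.cons_val_zero, Matrix.cons_val_one, Matrix.head_cons, e0, e1,
      one_smul, Fin.sum_univ_two]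
    have h2 : MvPolynomial.C ((2 : ℕ) : ℝ) = (2 : MvPolynomial (Fin 2) ℝ) := by
      rw [Nat.cast_ofNat]
      exact map_ofNat C 2
    rw [h2, spxA, spxB]
    ring

end SpxAux

/-- There is no Putinar-like Positivstellensatz for SDSOS: there exist
`n`, a polynomial `f`, and a constraint set `𝒢` with Archimedean preprime (in
particular compact nonempty feasibility set), `f > 0` on `𝒢₊`, yet for every `d`
one has `f ∉ H(𝕊𝔻𝕊𝕆𝕊, 𝒢, 2d)`. -/
theorem no_putinar_for_sdsos :
    ∃ (n : ℕ) (f : MvPolynomial (Fin n) ℝ) (G : Finset (MvPolynomial (Fin n) ℝ)),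
      (1 : MvPolynomial (Fin n) ℝ) ∈ G ∧
      (∃ N : ℕ, (MvPolynomial.C (N : ℝ) - ∑ i : Fin n, MvPolynomial.X i ^ 2)
        ∈ preprime G) ∧
      IsCompact (feasSet G) ∧ (feasSet G).Nonempty ∧
      (∀ x ∈ feasSet G, 0 < MvPolynomial.eval x f) ∧
      (∀ d : ℕ, f ∉ HPut (SDSOSset n) G (2 * d)) := by
  classical
  refine ⟨2, spxF, spxG, by simp [spxG], ⟨2, spx_arch⟩, ?_, ?_, ?_, ?_⟩
  · rw [spx_feas_eq]
    exact isCompact_univ_pi fun _ => isCompact_Icc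
  · refine ⟨fun _ => 0, spx_mem_feas.mpr ?_⟩
    norm_num
  · intro x hx
    obtain ⟨h0, h1⟩ := spx_mem_feas.mp hx
    have e : eval x spxF = 20 + 2 * x 0 + 2 * x 1 + 19 * (x 0 * x 1) := by
      simp [spxF]
    rw [e]
    obtain ⟨a1, a2⟩ := abs_le.mp h0
    obtain ⟨b1, b2⟩ := abs_le.mp h1
    nlinarith [mul_nonneg (by linarith : (0:ℝ) ≤ 1 + x 0)
        (by linarith : (0:ℝ) ≤ 1 + x 1),
      mul_nonneg (by linarith : (0:ℝ) ≤ 1 - x 0)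
        (by linarith : (0:ℝ) ≤ 1 - x 1)]
  · intro d hmem
    obtain ⟨k, s, g, hs, hg, -, hf⟩ := hmem
    have hT : ∀ i : Fin k,
        0 ≤ - eval ![1, 1] (s i * g i) + eval ![1, -1] (s i * g i)
          + eval ![-1, 1] (s i * g i) + eval ![-1, -1] (s i * g i) := by
      intro i
      have hgi := hg i
      simp only [spxG, Finset.mem_insert, Finset.mem_singleton] at hgi
      rcases hgi with h | h | h
      · rw [h, mul_one]
        exact spx_L_sdsos _ (hs i)
      · rw [h]
        have z1 : eval (![1, 1] : Fin 2 → ℝ) spxA = 0 := by simp [spxA]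
        have z2 : eval (![1, -1] : Fin 2 → ℝ) spxA = 0 := by simp [spxA]
        have z3 : eval (![-1, 1] : Fin 2 → ℝ) spxA = 0 := by simp [spxA]
        have z4 : eval (![-1, -1] : Fin 2 → ℝ) spxA = 0 := by simp [spxA]
        rw [map_mul, map_mul, map_mul, map_mul, z1, z2, z3, z4]
        ring_nf
        norm_num
      · rw [h]
        have z1 : eval (![1, 1] : Fin 2 → ℝ) spxB = 0 := by simp [spxB]
        have z2 : eval (![1, -1] : Fin 2 → ℝ) spxB = 0 := by simp [spxB]
        have z3 : eval (![-1, 1] : Fin 2 → ℝ) spxB = 0 := by simp [spxB]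
        have z4 : eval (![-1, -1] : Fin 2 → ℝ) spxB = 0 := by simp [spxB]
        rw [map_mul, map_mul, map_mul, map_mul, z1, z2, z3, z4]
        ring_nf
        norm_num
    have hsum := Finset.sum_nonneg (fun i (_ : i ∈ Finset.univ) => hT i)
    have hLf : (∑ i : Fin k,
        (- eval ![1, 1] (s i * g i) + eval ![1, -1] (s i * g i)
          + eval ![-1, 1] (s i * g i) + eval ![-1, -1] (s i * g i)))
        = - eval ![1, 1] spxF + eval ![1, -1] spxF + eval ![-1, 1] spxF
          + eval ![-1, -1] spxF := by
      rw [hf, map_sum, map_sum, map_sum, map_sum, ← Finset.sum_neg_distrib,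
        ← Finset.sum_add_distrib, ← Finset.sum_add_distrib, ← Finset.sum_add_distrib]
    have hval : - eval (![1, 1] : Fin 2 → ℝ) spxF + eval ![1, -1] spxF
        + eval ![-1, 1] spxF + eval ![-1, -1] spxF = -6 := by
      simp [spxF]
      norm_num
    rw [hLf, hval] at hsum
    norm_num at hsum
end

section
/- Every circuit polynomial of total degree d is a d-junta: if f ∈ ℝ[x₁,…,xₙ] is a circuit polynomial with deg(f) = d, then there exists a subset S ⊆ [n] with |S| ≤ d such that f(x) = f(y) for all x, y ∈ {0,1}ⁿ that agree on all coordinates in S. -/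
open MvPolynomial Finset

/-- Auxiliary: if all exponent vectors in the support of `f` are supported in `S`,
then `eval f` only depends on the coordinates in `S`. -/
lemma aux_eval_congr {n : ℕ} (f : MvPolynomial (Fin n) ℝ) (S : Finset (Fin n))
    (hS : ∀ m ∈ f.support, ∀ i, m i ≠ 0 → i ∈ S)
    (x y : Fin n → ℝ) (hxy : ∀ i ∈ S, x i = y i) :
    MvPolynomial.eval x f = MvPolynomial.eval y f := by
  rw [MvPolynomial.eval_eq, MvPolynomial.eval_eq]
  refine Finset.sum_congr rfl fun m hm => ?_
  congr 1
  refine Finset.prod_congr rfl fun i hi => ?_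
  rw [hxy i (hS m hm i (Finsupp.mem_support_iff.mp hi))]

/-- Auxiliary: card of support bounded by the sum of the entries. -/
lemma aux_card_le {n : ℕ} (β : Fin n →₀ ℕ) : β.support.card ≤ ∑ i : Fin n, β i :=
  calc β.support.card = ∑ _i ∈ β.support, 1 := by simp
    _ ≤ ∑ i ∈ β.support, β i := Finset.sum_le_sum fun i hi =>
        Nat.one_le_iff_ne_zero.mpr (Finsupp.mem_support_iff.mp hi)
    _ ≤ ∑ i : Fin n, β i := Finset.sum_le_sum_of_subset (Finset.subset_univ _)

/-- Every circuit polynomial of total degree `d` is a `d`-junta on the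
Boolean hypercube. -/
theorem circuit_is_junta (n d : ℕ) (f : MvPolynomial (Fin n) ℝ)
    (hf : IsCircuit f) (hdeg : f.totalDegree = d) :
    ∃ S : Finset (Fin n), S.card ≤ d ∧
      ∀ x y : Fin n → ℝ, x ∈ Hypercube n → y ∈ Hypercube n →
        (∀ i ∈ S, x i = y i) →
        MvPolynomial.eval x f = MvPolynomial.eval y f := by
  by_cases hf0 : f = 0
  · exact ⟨∅, by simp, fun x y _ _ _ => by rw [hf0]; simp⟩
  rcases hf with ⟨w, c, _hc, hfw⟩ | ⟨r, _hr, α, c, β, fβ, lam, hc, _hev, hAff, hlam, hlam1, hβ, hfeq⟩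
  · -- monomial square case
    have hcne : c ≠ 0 := by
      rintro rfl
      exact hf0 (by rw [hfw, monomial_zero])
    refine ⟨w.support, ?_, fun x y _ _ hxy => ?_⟩
    · have hd : d = (2 • w).sum fun _ e => e := by
        rw [← hdeg, hfw, totalDegree_monomial _ hcne]
      have hsum : (2 • w).sum (fun _ e => e) = ∑ i : Fin n, 2 * w i := by
        rw [Finsupp.sum_fintype _ _ (fun _ => rfl)]
        simp
      calc w.support.card ≤ ∑ i : Fin n, w i := aux_card_le w
        _ ≤ ∑ i : Fin n, 2 * w i := Finset.sum_le_sum fun i _ => by omega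
        _ = d := by rw [hd, hsum]
    · refine aux_eval_congr f w.support ?_ x y hxy
      intro m hm i hi
      have hm' : m = 2 • w := by
        have : coeff m f ≠ 0 := MvPolynomial.mem_support_iff.mp hm
        rw [hfw, coeff_monomial] at this
        by_contra h
        exact this (if_neg (fun he => h he.symm))
      rw [hm'] at hi
      simp only [Finsupp.smul_apply, smul_eq_mul] at hi
      exact Finsupp.mem_support_iff.mpr (by omega)
  · -- genuine circuit case
    have hαinj : Function.Injective α := by
      intro j j' h
      have := hAff.injective (by rw [h] : (fun i => (α j i : ℝ)) = fun i => (α j' i : ℝ))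
      exact this
    -- (A) support of each α j is contained in support of β
    have hA : ∀ j i, α j i ≠ 0 → β i ≠ 0 := by
      intro j i hji hβi
      have h1 : (0 : ℝ) < ∑ j', lam j' * (α j' i : ℝ) := by
        refine Finset.sum_pos' (fun j' _ => mul_nonneg (hlam j').le (Nat.cast_nonneg _)) ?_
        exact ⟨j, Finset.mem_univ j, mul_pos (hlam j) (by exact_mod_cast Nat.pos_of_ne_zero hji)⟩
      rw [← hβ i, hβi] at h1
      simp at h1
    -- every exponent in the support of f is β or some α j
    have hsupp : ∀ m ∈ f.support, m = β ∨ ∃ j, m = α j := by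
      intro m hm
      by_contra h
      push_neg at h
      obtain ⟨hβm, hαm⟩ := h
      have hcm : coeff m f ≠ 0 := Finsupp.mem_support_iff.mp hm
      rw [hfeq] at hcm
      simp only [coeff_add, coeff_monomial] at hcm
      rw [if_neg (fun he => hβm he.symm)] at hcm
      rw [MvPolynomial.coeff_sum] at hcm
      simp only [coeff_monomial] at hcm
      apply hcm
      rw [zero_add]
      exact Finset.sum_eq_zero fun j _ => if_neg (fun he => hαm j he.symm)
    -- (B) degree bound : ∑ i, β i ≤ d
    have hB : ∑ i : Fin n, β i ≤ d := by
      by_cases hex : ∃ j0, β = α j0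
      · obtain ⟨j0, hj0⟩ := hex
        -- affine independence forces the index type to be a singleton
        have hall : ∀ j, j = j0 := by
          intro j
          by_contra hj
          have hw := affineIndependent_iff.mp hAff Finset.univ
            (fun j' => lam j' - if j' = j0 then 1 else 0) ?_ ?_ j (Finset.mem_univ j)
          · simp only [hj, if_false, sub_zero] at hw
            exact (hlam j).ne' hw
          · rw [Finset.sum_sub_distrib, hlam1, Finset.sum_ite_eq' Finset.univ j0]
            simp
          · funext i
            simp only [Finset.sum_apply, Pi.smul_apply, smul_eq_mul, Pi.zero_apply]
            have : ∑ j', (lam j' - if j' = j0 then 1 else 0) * (α j' i : ℝ)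
                = (∑ j', lam j' * (α j' i : ℝ))
                  - ∑ j', (if j' = j0 then 1 else 0) * (α j' i : ℝ) := by
              rw [← Finset.sum_sub_distrib]
              exact Finset.sum_congr rfl fun j' _ => by ring
            have h2 : ∑ j', (if j' = j0 then (1:ℝ) else 0) * ((α j' i : ℕ) : ℝ)
                = ((α j0 i : ℕ) : ℝ) := by simp [ite_mul]
            rw [this, ← hβ i, h2, hj0, sub_self]
        -- f is a single monomial in β
        have hfβ : f = monomial β (fβ + ∑ j, c j) := by
          have hall2 : ∑ j, monomial (α j) (c j) = ∑ j, (monomial β) (c j) :=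
            Finset.sum_congr rfl fun j _ => by rw [hall j, ← hj0]
          rw [hfeq, hall2, ← map_sum, ← map_add]
        have hne : fβ + ∑ j, c j ≠ 0 := fun h => hf0 (by rw [hfβ, h, monomial_zero])
        have hd : d = β.sum fun _ e => e := by
          rw [← hdeg, hfβ, totalDegree_monomial _ hne]
        rw [hd, Finsupp.sum_fintype _ _ (fun _ => rfl)]
      · push_neg at hex
        -- each α j is in the support of f
        have hαsupp : ∀ j, α j ∈ f.support := by
          intro j
          rw [MvPolynomial.mem_support_iff, hfeq]
          simp only [coeff_add, coeff_monomial, MvPolynomial.coeff_sum]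
          rw [if_neg (hex j), zero_add]
          rw [Finset.sum_eq_single j (fun j' _ hj' => if_neg (fun he => hj' (hαinj he)))
            (fun h => absurd (Finset.mem_univ j) h), if_pos rfl]
          exact (hc j).ne'
        have hαdeg : ∀ j, ∑ i : Fin n, α j i ≤ d := by
          intro j
          have := MvPolynomial.le_totalDegree (hαsupp j)
          rw [hdeg] at this
          rwa [Finsupp.sum_fintype _ _ (fun _ => rfl)] at this
        have hcast : ((∑ i : Fin n, β i : ℕ) : ℝ) ≤ (d : ℝ) := by
          push_cast
          calc ∑ i : Fin n, (β i : ℝ) = ∑ i : Fin n, ∑ j, lam j * (α j i : ℝ) :=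
                Finset.sum_congr rfl fun i _ => hβ i
            _ = ∑ j, lam j * ∑ i : Fin n, (α j i : ℝ) := by
                rw [Finset.sum_comm]
                exact Finset.sum_congr rfl fun j _ => by rw [Finset.mul_sum]
            _ ≤ ∑ j, lam j * (d : ℝ) := Finset.sum_le_sum fun j _ => by
                refine mul_le_mul_of_nonneg_left ?_ (hlam j).le
                exact_mod_cast hαdeg j
            _ = (d : ℝ) := by rw [← Finset.sum_mul, hlam1, one_mul]
        exact_mod_cast hcast
    refine ⟨β.support, le_trans (aux_card_le β) hB, fun x y _ _ hxy => ?_⟩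
    refine aux_eval_congr f β.support ?_ x y hxy
    intro m hm i hi
    rcases hsupp m hm with rfl | ⟨j, rfl⟩
    · exact Finsupp.mem_support_iff.mpr hi
    · exact Finsupp.mem_support_iff.mpr (hA j i hi)
end
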